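/- Let m, n ≥ 1 be integers, and suppose P, C ∈ ℤ[q] satisfy P · ([F_m]!_q · [F_n]!_q) = [F_{m+n}]!_q (so P is the q-Fibonomial coefficient binom_F(m+n, n)_q) and C · [F_{m+n}]_q = P (so C is the q-FiboCatalan number Cat_F(m,n)_q). If P is symmetric and unimodal, then every coefficient of C is nonnegative. -/

import Mathlib

open Polynomial

/-- The q-analog `[n]_q = 1 + q + ⋯ + q^(n-1)` as a polynomial in `ℤ[q]`. -/
noncomputable def qAnalog (n : ℕ) : Polynomial ℤ :=
  ∑ i ∈ Finset.range n, X ^ i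

/-- The q-analog `[n]_{q^r} = 1 + q^r + ⋯ + q^(r(n-1))` as a polynomial in `ℤ[q]`. -/
noncomputable def qAnalogPow (n r : ℕ) : Polynomial ℤ :=
  ∑ i ∈ Finset.range n, X ^ (r * i)

/-- A polynomial of degree `d` is symmetric if `c_k = c_{d-k}` for all `0 ≤ k ≤ d`. -/
def IsSymmPoly (P : Polynomial ℤ) : Prop :=
  ∀ k ≤ P.natDegree, P.coeff k = P.coeff (P.natDegree - k)

/-- A polynomial is unimodal if its coefficient sequence increases up to some
index `M` and decreases afterwards. -/
def IsUnimodalPoly (P : Polynomial ℤ) : Prop :=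
  ∃ M : ℕ, (∀ k, k < M → P.coeff k ≤ P.coeff (k + 1)) ∧
    (∀ k, M ≤ k → P.coeff (k + 1) ≤ P.coeff k)

/-- The q-Fibonacci factorial `[F_n]!_q = ∏_{k=1}^n [F_k]_q`. -/
noncomputable def qFibFactorial (n : ℕ) : Polynomial ℤ :=
  ∏ k ∈ Finset.range n, qAnalog (Nat.fib (k + 1))

/-!
Write `N = F_{m+n}`. Multiplying `C · [N]_q = P` by `q - 1` gives `C · (q^N - 1) = P · (q - 1)`,
that is `c_k = (p_k - p_{k-1}) + c_{k-N}`. For a symmetric unimodal `P` the differences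
`p_k - p_{k-1}` are nonnegative on the lower half of its coefficients, and `p_0 = 1` because
the Fibonomial is monic, so induction on `k` makes `c_k ≥ 0` there. The quotient `C` of the
symmetric `P` by the symmetric `[N]_q` is symmetric again and `deg C ≤ deg P`, which transfers
nonnegativity to the upper half.
-/

theorem qAnalog_zero : qAnalog 0 = 0 := by
  simp [qAnalog]

theorem coeff_qAnalog (n k : ℕ) : (qAnalog n).coeff k = if k < n then 1 else 0 := by
  simp [qAnalog, coeff_X_pow]

theorem qAnalog_mul_X_sub_one (n : ℕ) : qAnalog n * (X - 1) = X ^ n - 1 :=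
  geom_sum_mul X n

theorem monic_qAnalog {n : ℕ} (hn : n ≠ 0) : (qAnalog n).Monic :=
  monic_geom_sum_X hn

theorem natDegree_qAnalog (n : ℕ) : (qAnalog n).natDegree = n - 1 := by
  rcases Nat.eq_zero_or_pos n with rfl | hn
  · simp [qAnalog_zero]
  · refine natDegree_eq_of_le_of_coeff_ne_zero ?_ (by simp [coeff_qAnalog, hn])
    exact natDegree_le_iff_coeff_eq_zero.2 fun k hk ↦ by rw [coeff_qAnalog, if_neg (by omega)]

theorem monic_qFibFactorial (n : ℕ) : (qFibFactorial n).Monic :=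
  monic_prod_of_monic _ _ fun k _ ↦ monic_qAnalog (Nat.fib_pos.2 k.succ_pos).ne'

theorem isSymmPoly_qAnalog (n : ℕ) : IsSymmPoly (qAnalog n) := by
  intro k hk
  rw [natDegree_qAnalog] at hk ⊢
  simp only [coeff_qAnalog]
  split_ifs <;> omega

theorem IsSymmPoly.reverse_eq {P : ℤ[X]} (h : IsSymmPoly P) : P.reverse = P := by
  ext k
  rw [coeff_reverse]
  by_cases hk : k ≤ P.natDegree
  · rw [revAt_le hk, ← h k hk]
  · rw [revAt_eq_self_of_lt (not_le.1 hk)]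

theorem isSymmPoly_of_reverse_eq {P : ℤ[X]} (h : P.reverse = P) : IsSymmPoly P := by
  intro k hk
  conv_lhs => rw [← h]
  rw [coeff_reverse, revAt_le hk]

theorem IsSymmPoly.of_mul_right {C Q : ℤ[X]} (hCQ : IsSymmPoly (C * Q)) (hQ : IsSymmPoly Q)
    (hQ0 : Q ≠ 0) : IsSymmPoly C := by
  refine isSymmPoly_of_reverse_eq (mul_right_cancel₀ hQ0 ?_)
  calc C.reverse * Q = (C * Q).reverse := by rw [reverse_mul_of_domain, hQ.reverse_eq]
    _ = C * Q := hCQ.reverse_eq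

theorem IsSymmPoly.coeff_zero_eq_leadingCoeff {P : ℤ[X]} (h : IsSymmPoly P) :
    P.coeff 0 = P.leadingCoeff :=
  h 0 (Nat.zero_le _)

theorem IsSymmPoly.coeff_le_coeff_succ {P : ℤ[X]} (hsymm : IsSymmPoly P)
    (huni : IsUnimodalPoly P) {k : ℕ} (hk : 2 * k < P.natDegree) :
    P.coeff k ≤ P.coeff (k + 1) := by
  obtain ⟨M, hup, hdown⟩ := huni
  by_cases hkM : k < M
  · exact hup k hkM
  -- past the mode, read the step `k → k + 1` as its mirror image `d - k - 1 → d - k`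
  have hmirror := hdown (P.natDegree - k - 1) (by omega)
  rw [hsymm k (by omega), hsymm (k + 1) (by omega)]
  rwa [show P.natDegree - k - 1 + 1 = P.natDegree - k by omega,
    show P.natDegree - k - 1 = P.natDegree - (k + 1) by omega] at hmirror

theorem coeff_eq_of_mul_qAnalog_eq {C P : ℤ[X]} {N : ℕ} (hC : C * qAnalog N = P) (k : ℕ) :
    C.coeff k = P.coeff k - (if 1 ≤ k then P.coeff (k - 1) else 0)
      + (if N ≤ k then C.coeff (k - N) else 0) := by
  have hE : C * (X ^ N - 1) = P * (X ^ 1 - 1) := by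
    rw [← hC, pow_one, mul_assoc, qAnalog_mul_X_sub_one]
  have hk := congrArg (coeff · k) hE
  simp only [mul_sub, mul_one, coeff_sub, coeff_mul_X_pow'] at hk
  split_ifs at hk ⊢ <;> omega

section QuotientByQAnalog

variable {C P : ℤ[X]} {N : ℕ}

theorem coeff_nonneg_of_two_mul_le_natDegree_succ (hC : C * qAnalog N = P) (hN : N ≠ 0)
    (hsymm : IsSymmPoly P) (huni : IsUnimodalPoly P) (h0 : 0 ≤ P.coeff 0) (k : ℕ)
    (hk : 2 * k ≤ P.natDegree + 1) : 0 ≤ C.coeff k := by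
  induction k using Nat.strong_induction_on with
  | _ k ih =>
    have hdiff : 0 ≤ P.coeff k - (if 1 ≤ k then P.coeff (k - 1) else 0) := by
      split_ifs with hk1
      · have := hsymm.coeff_le_coeff_succ huni (k := k - 1) (by omega)
        rw [Nat.sub_add_cancel hk1] at this
        exact sub_nonneg.2 this
      · simpa [Nat.lt_one_iff.1 (not_le.1 hk1)] using h0
    have hprev : 0 ≤ (if N ≤ k then C.coeff (k - N) else 0) := by
      split_ifs with hNk
      · exact ih (k - N) (by omega) (by omega)
      · exact le_rfl
    rw [coeff_eq_of_mul_qAnalog_eq hC k]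
    exact add_nonneg hdiff hprev

theorem coeff_nonneg_of_mul_qAnalog_eq (hC : C * qAnalog N = P) (hsymm : IsSymmPoly P)
    (huni : IsUnimodalPoly P) (hpos : 0 < P.leadingCoeff) (i : ℕ) : 0 ≤ C.coeff i := by
  have hP0 : P ≠ 0 := leadingCoeff_ne_zero.1 hpos.ne'
  have hN : N ≠ 0 := by
    rintro rfl
    exact hP0 (by rw [← hC, qAnalog_zero, mul_zero])
  have hQ0 : qAnalog N ≠ 0 := (monic_qAnalog hN).ne_zero
  have hC0 : C ≠ 0 := by
    rintro rfl
    exact hP0 (by rw [← hC, zero_mul])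
  have hCsymm : IsSymmPoly C := (hC ▸ hsymm).of_mul_right (isSymmPoly_qAnalog N) hQ0
  have hdeg : C.natDegree ≤ P.natDegree := by
    rw [← hC, natDegree_mul hC0 hQ0]
    exact Nat.le_add_right _ _
  have hlower := coeff_nonneg_of_two_mul_le_natDegree_succ hC hN hsymm huni
    (hsymm.coeff_zero_eq_leadingCoeff ▸ hpos.le)
  by_cases hi : 2 * i ≤ P.natDegree + 1
  · exact hlower i hi
  by_cases hiC : i ≤ C.natDegree
  · rw [hCsymm i hiC]
    exact hlower _ (by omega)
  · rw [coeff_eq_zero_of_natDegree_lt (not_le.1 hiC)]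

end QuotientByQAnalog

theorem qFiboCatalan_nonneg_general (m n : ℕ)
    (P C : Polynomial ℤ)
    (hP : P * (qFibFactorial m * qFibFactorial n) = qFibFactorial (m + n))
    (hC : C * qAnalog (Nat.fib (m + n)) = P)
    (hsymm : IsSymmPoly P) (huni : IsUnimodalPoly P) :
    ∀ i : ℕ, 0 ≤ C.coeff i := by
  have hPmonic : P.Monic := ((monic_qFibFactorial m).mul (monic_qFibFactorial n)).of_mul_monic_right
    (hP ▸ monic_qFibFactorial (m + n))
  exact coeff_nonneg_of_mul_qAnalog_eq hC hsymm huni (hPmonic.leadingCoeff ▸ one_pos)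

theorem qFiboCatalan_nonneg (m n : ℕ) (hm : 1 ≤ m) (hn : 1 ≤ n)
    (P C : Polynomial ℤ)
    (hP : P * (qFibFactorial m * qFibFactorial n) = qFibFactorial (m + n))
    (hC : C * qAnalog (Nat.fib (m + n)) = P)
    (hsymm : IsSymmPoly P) (huni : IsUnimodalPoly P) :
    ∀ i : ℕ, 0 ≤ C.coeff i :=
  qFiboCatalan_nonneg_general m n P C hP hC hsymm huni
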